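/- If r is a regular closed polygon in ℝ², then r can be written as r = r₁ + r₂ where r₁, r₂ are regular closed polygons each with connected complement: ℝ² \ rᵢ is connected for i = 1, 2. -/

import Mathlib

/-!
A polygon `r` is cellwise constant for the arrangement of the finitely many lines bounding the
half-planes it is built from, so `rᶜ` contains finitely many open convex cells with dense union.
Pick a point `p_D` and a generic point `q_D` in every cell `D`, and let `K` be the union of thin
rectangles ("sticks") from the origin to the points `p_D`, thin enough to miss every `q_D`. Then
`K` is a polygon, `interior K` is connected because every stick contains `0`, `Kᶜ` is connected
because `K` is bounded and star-shaped, and every cell meets both `interior K` and `Kᶜ`. Hence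
`rᶜ ∪ Kᶜ` and `rᶜ ∪ interior K` are connected, and these open sets are dense in the complements of
the regular closed meets `r ⊓ K` and `r ⊓ Kᶜ`, whose union is `r`.
-/

/-- Membership in the Boolean subalgebra of `RC(ℝ²)` generated by closed half-planes:
regular closed polygons. -/
inductive IsPolygon : Set (Fin 2 → ℝ) → Prop
  | halfplane (a : Fin 2 → ℝ) (c : ℝ) (ha : a ≠ 0) :
      IsPolygon {x | ∑ i, a i * x i ≤ c}
  | sup (X Y : Set (Fin 2 → ℝ)) : IsPolygon X → IsPolygon Y → IsPolygon (X ∪ Y)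
  | inf (X Y : Set (Fin 2 → ℝ)) : IsPolygon X → IsPolygon Y →
      IsPolygon (closure (interior (X ∩ Y)))
  | compl (X : Set (Fin 2 → ℝ)) : IsPolygon X → IsPolygon (closure Xᶜ)

open Set Filter Topology Bornology Matrix

section Connected

variable {X : Type*} [TopologicalSpace X]

theorem IsConnected.union_of_subset_closure_sUnion {B U : Set X} {𝒟 : Set (Set X)}
    (hB : IsConnected B) (h𝒟 : ∀ D ∈ 𝒟, IsPreconnected D ∧ (D ∩ B).Nonempty)
    (hsub : ⋃₀ 𝒟 ⊆ U) (hU : U ⊆ closure (⋃₀ 𝒟)) : IsConnected (U ∪ B) := by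
  obtain ⟨b, hb⟩ := hB.nonempty
  have hT : IsConnected (⋃₀ 𝒟 ∪ B) := by
    refine ⟨⟨b, .inr hb⟩, isPreconnected_of_forall b ?_⟩
    rintro y (⟨D, hD, hy⟩ | hy)
    · refine ⟨D ∪ B, union_subset_union_left B (subset_sUnion_of_mem hD), .inr hb, .inl hy, ?_⟩
      exact (h𝒟 D hD).1.union' (h𝒟 D hD).2 hB.isPreconnected
    · exact ⟨B, subset_union_right, hb, hy, hB.isPreconnected⟩
  refine hT.subset_closure (union_subset_union_left B hsub) ?_
  exact union_subset (hU.trans (closure_mono subset_union_left))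
    (subset_union_right.trans subset_closure)

theorem IsConnected.compl_closure_interior_inter {r K : Set X} (hr : IsClosed r)
    (hK : IsClosed K) (h : IsConnected (rᶜ ∪ Kᶜ)) : IsConnected (closure (interior (r ∩ K)))ᶜ := by
  rw [← interior_compl, ← closure_compl, compl_inter]
  exact h.subset_closure ((hr.isOpen_compl.union hK.isOpen_compl).subset_interior_closure)
    interior_subset

theorem closure_interior_inter_union_closure_interior_inter_closure_compl {r K : Set X}
    (hr : closure (interior r) = r) (hK : closure (interior K) = K) :
    closure (interior (r ∩ K)) ∪ closure (interior (r ∩ closure Kᶜ)) = r := by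
  have hrc : IsClosed r := hr ▸ isClosed_closure
  refine subset_antisymm (union_subset ?_ ?_) ?_
  · exact hrc.closure_subset_iff.2 (interior_subset.trans inter_subset_left)
  · exact hrc.closure_subset_iff.2 (interior_subset.trans inter_subset_left)
  refine hr.ge.trans (closure_minimal (fun x hx => ?_) (isClosed_closure.union isClosed_closure))
  by_cases hxK : x ∈ K
  · left
    rw [← hK] at hxK
    have := isOpen_interior.inter_closure ⟨hx, hxK⟩
    rwa [← interior_inter] at this
  · right
    apply subset_closure
    rw [interior_inter]
    exact ⟨hx, (hK ▸ isClosed_closure).isOpen_compl.subset_interior_closure hxK⟩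

end Connected

section Normed

variable {E : Type*} [NormedAddCommGroup E] [NormedSpace ℝ E]

theorem isConnected_setOf_le_norm (hE : 1 < Module.rank ℝ E) {R : ℝ} (hR : 0 < R) :
    IsConnected {x : E | R ≤ ‖x‖} := by
  have : {x : E | R ≤ ‖x‖} = (fun p : E × ℝ => p.2 • p.1) '' (Metric.sphere 0 1 ×ˢ Ici R) := by
    ext x
    constructor
    · intro hx
      have hx0 : ‖x‖ ≠ 0 := (hR.trans_le hx).ne'
      refine ⟨(‖x‖⁻¹ • x, ‖x‖), ⟨?_, hx⟩, ?_⟩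
      · simp [norm_smul, hx0]
      · simp [smul_smul, hx0]
    · rintro ⟨⟨u, t⟩, ⟨hu, ht⟩, rfl⟩
      simp only [mem_sphere_zero_iff_norm, mem_Ici] at hu ht
      simp [norm_smul, hu, abs_of_pos (hR.trans_le ht), ht]
  rw [this]
  exact ((isConnected_sphere hE 0 zero_le_one).prod isConnected_Ici).image _
    (by fun_prop)

theorem StarConvex.isConnected_compl (hE : 1 < Module.rank ℝ E) {A : Set E}
    (hA : StarConvex ℝ 0 A) (hb : IsBounded A) : IsConnected Aᶜ := by
  rcases A.eq_empty_or_nonempty with rfl | ⟨a, ha⟩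
  · simpa using isConnected_univ
  have h0 : (0 : E) ∈ A := by simpa using hA.smul_mem ha le_rfl zero_le_one
  obtain ⟨R, hR, hAR⟩ := hb.subset_ball_lt 0 0
  have hB : {x : E | R ≤ ‖x‖} ⊆ Aᶜ := fun x hx hxA => by
    simpa using (mem_ball_zero_iff.1 (hAR hxA)).trans_le hx
  have hray : ∀ z ∈ Aᶜ, (· • z) '' Ici (1 : ℝ) ⊆ Aᶜ := by
    rintro z hz _ ⟨s, hs, rfl⟩ hsz
    have hs0 : (0 : ℝ) < s := zero_lt_one.trans_le hs
    refine hz ?_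
    simpa [smul_smul, hs0.ne'] using
      hA.smul_mem hsz (inv_nonneg.2 hs0.le) (inv_le_one_of_one_le₀ hs)
  have := (isConnected_setOf_le_norm hE hR).union_of_subset_closure_sUnion
    (U := Aᶜ) (𝒟 := (fun z => (· • z) '' Ici (1 : ℝ)) '' Aᶜ) ?_ ?_ ?_
  · rwa [union_eq_left.2 hB] at this
  · rintro _ ⟨z, hz, rfl⟩
    refine ⟨isPreconnected_Ici.image _ (by fun_prop), ?_⟩
    have hz0 : 0 < ‖z‖ := norm_pos_iff.2 (ne_of_mem_of_not_mem h0 hz).symm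
    refine ⟨(1 + R / ‖z‖) • z, ⟨_, ?_, rfl⟩, ?_⟩
    · simp [hR.le, div_nonneg, hz0.le]
    · simp only [mem_ofPred_eq, norm_smul, Real.norm_eq_abs]
      rw [abs_of_pos (by positivity), add_mul, div_mul_cancel₀ _ hz0.ne']
      linarith
  · exact sUnion_subset (by rintro _ ⟨z, hz, rfl⟩; exact hray z hz)
  · exact fun z hz => subset_closure ⟨_, ⟨z, hz, rfl⟩, 1, mem_Ici.2 le_rfl, one_smul ℝ z⟩

end Normed

section Arrangement

variable {E : Type*} [NormedAddCommGroup E] [NormedSpace ℝ E]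

theorem ContinuousAffineMap.dense_setOf_ne_zero {f : E →ᴬ[ℝ] ℝ} (hf : f.contLinear ≠ 0) :
    Dense {x | f x ≠ 0} := by
  obtain ⟨v, hv⟩ := DFunLike.ne_iff.1 hf
  have hline : ∀ x : E, ∀ t : ℝ, f (x + t • v) = f x + t * f.contLinear v := fun x t => by
    rw [add_comm x, ← vadd_eq_add, f.map_vadd, vadd_eq_add, map_smul, smul_eq_mul, add_comm]
  intro x
  by_cases hx : f x ≠ 0
  · exact subset_closure hx
  have hlim : Tendsto (fun t : ℝ => x + t • v) (𝓝[≠] 0) (𝓝 x) :=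
    ((by fun_prop : Continuous fun t : ℝ => x + t • v).tendsto' 0 x (by simp)).mono_left
      nhdsWithin_le_nhds
  refine mem_closure_of_tendsto hlim (eventually_nhdsWithin_of_forall fun t ht => ?_)
  simpa [hline, not_not.1 hx] using And.intro ht hv

theorem dense_setOf_forall_ne_zero {ι : Type*} {s : Set ι} (hs : s.Finite)
    {f : ι → E →ᴬ[ℝ] ℝ} (hf : ∀ i ∈ s, (f i).contLinear ≠ 0) :
    Dense {x | ∀ i ∈ s, f i x ≠ 0} := by
  have h := (hs.image fun i => {x | f i x ≠ 0}).dense_sInter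
    (by rintro _ ⟨i, -, rfl⟩; exact isOpen_ne_fun (f i).continuous continuous_const)
    (by rintro _ ⟨i, hi, rfl⟩; exact ContinuousAffineMap.dense_setOf_ne_zero (hf i hi))
  simpa [sInter_image, ofPred_forall] using h

variable (F : Finset (E →ᴬ[ℝ] ℝ))

/-- The open cell of `x` in the arrangement of the hyperplanes `f = 0`, `f ∈ F`; it is empty when
`x` lies on one of the hyperplanes. -/
def arrangementCell (x : E) : Set E := {y | ∀ f ∈ F, 0 < f x * f y}

def IsCellwiseConstant (S : Set E) : Prop :=
  ∀ x, ∀ y ∈ arrangementCell F x, (y ∈ S ↔ x ∈ S)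

variable {F}

theorem mem_arrangementCell_comm {x y : E} :
    y ∈ arrangementCell F x ↔ x ∈ arrangementCell F y := by
  simp only [arrangementCell, mem_ofPred_eq, mul_comm]

theorem mem_arrangementCell_self {x : E} : x ∈ arrangementCell F x ↔ ∀ f ∈ F, f x ≠ 0 := by
  simp only [arrangementCell, mem_ofPred_eq, mul_self_pos]

theorem mem_arrangementCell_self_of_mem {x y : E} (h : y ∈ arrangementCell F x) :
    x ∈ arrangementCell F x :=
  mem_arrangementCell_self.2 fun f hf => left_ne_zero_of_mul (h f hf).ne'

theorem isOpen_arrangementCell (x : E) : IsOpen (arrangementCell F x) := by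
  have : arrangementCell F x = ⋂ f ∈ F, {y | 0 < f x * f y} := by
    ext; simp [arrangementCell]
  rw [this]
  exact isOpen_biInter_finset fun f _ => isOpen_lt continuous_const (by fun_prop)

theorem convex_arrangementCell (x : E) : Convex ℝ (arrangementCell F x) := by
  have : arrangementCell F x = ⋂ f ∈ F, ⇑(f x • f : E →ᴬ[ℝ] ℝ) ⁻¹' Ioi 0 := by
    ext; simp [arrangementCell]
  rw [this]
  exact convex_iInter₂ fun f _ => (convex_Ioi 0).affine_preimage (f x • f : E →ᴬ[ℝ] ℝ).toAffineMap

theorem finite_range_arrangementCell : (range (arrangementCell F)).Finite := by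
  -- a cell only depends on the signs of the functionals at its point
  let cellOfSigns (σ : F → SignType) : Set E := {y | ∀ f : F, σ f * SignType.sign (f.1 y) = 1}
  refine (finite_range cellOfSigns).subset ?_
  rintro _ ⟨x, rfl⟩
  refine ⟨fun f => SignType.sign (f.1 x), ?_⟩
  ext y
  simp [cellOfSigns, arrangementCell, ← sign_mul, sign_eq_one_iff]

theorem IsCellwiseConstant.mono {G : Finset (E →ᴬ[ℝ] ℝ)} {S : Set E} (h : IsCellwiseConstant F S)
    (hFG : F ⊆ G) : IsCellwiseConstant G S :=
  fun x y hy => h x y fun f hf => hy f (hFG hf)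

theorem IsCellwiseConstant.compl {S : Set E} (h : IsCellwiseConstant F S) :
    IsCellwiseConstant F Sᶜ :=
  fun x y hy => not_congr (h x y hy)

theorem IsCellwiseConstant.union {S T : Set E} (hS : IsCellwiseConstant F S)
    (hT : IsCellwiseConstant F T) : IsCellwiseConstant F (S ∪ T) :=
  fun x y hy => or_congr (hS x y hy) (hT x y hy)

theorem IsCellwiseConstant.inter {S T : Set E} (hS : IsCellwiseConstant F S)
    (hT : IsCellwiseConstant F T) : IsCellwiseConstant F (S ∩ T) :=
  fun x y hy => and_congr (hS x y hy) (hT x y hy)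

theorem IsCellwiseConstant.closure {S : Set E} (h : IsCellwiseConstant F S) :
    IsCellwiseConstant F (_root_.closure S) := by
  -- the cell of a point of `closure S` is an open neighbourhood of it, so it meets `S`
  have key : ∀ x, ∀ y ∈ arrangementCell F x, y ∈ _root_.closure S → x ∈ _root_.closure S := by
    intro x y hy hyS
    have hyy := mem_arrangementCell_self_of_mem (mem_arrangementCell_comm.1 hy)
    obtain ⟨z, hz, hzS⟩ := mem_closure_iff.1 hyS _ (isOpen_arrangementCell y) hyy
    exact subset_closure ((h x y hy).1 ((h y z hz).1 hzS))
  exact fun x y hy => ⟨key x y hy, key y x (mem_arrangementCell_comm.1 hy)⟩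

theorem IsCellwiseConstant.interior {S : Set E} (h : IsCellwiseConstant F S) :
    IsCellwiseConstant F (_root_.interior S) := by
  have := h.compl.closure.compl
  rwa [closure_compl, compl_compl] at this

theorem isCellwiseConstant_setOf_le_zero {f : E →ᴬ[ℝ] ℝ} (hf : f ∈ F) :
    IsCellwiseConstant F {x | f x ≤ 0} := by
  intro x y hy
  have := hy f hf
  simp only [mem_ofPred_eq]
  constructor <;> intro h <;> nlinarith

theorem IsCellwiseConstant.exists_cells_dense_in_compl {S : Set E} (h : IsCellwiseConstant F S)
    (hF : ∀ f ∈ F, f.contLinear ≠ 0) (hS : IsClosed S) :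
    ∃ 𝒟 : Set (Set E), 𝒟.Finite ∧ (∀ D ∈ 𝒟, IsOpen D ∧ Convex ℝ D ∧ D.Nonempty) ∧
      ⋃₀ 𝒟 ⊆ Sᶜ ∧ Sᶜ ⊆ _root_.closure (⋃₀ 𝒟) := by
  set G := {x | ∀ f ∈ F, f x ≠ 0}
  have hG : Dense G := dense_setOf_forall_ne_zero F.finite_toSet hF
  have hcover : Sᶜ ∩ G ⊆ ⋃₀ (arrangementCell F '' (Sᶜ ∩ G)) :=
    fun x hx => ⟨_, mem_image_of_mem _ hx, mem_arrangementCell_self.2 hx.2⟩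
  refine ⟨arrangementCell F '' (Sᶜ ∩ G),
    finite_range_arrangementCell.subset (image_subset_range _ _), ?_, ?_, ?_⟩
  · rintro _ ⟨x, hx, rfl⟩
    exact ⟨isOpen_arrangementCell x, convex_arrangementCell x, x,
      mem_arrangementCell_self.2 hx.2⟩
  · rintro y ⟨_, ⟨x, hx, rfl⟩, hy⟩
    exact not_congr (h x y hy) |>.2 hx.1
  · exact (hG.open_subset_closure_inter hS.isOpen_compl).trans (closure_mono hcover)

end Arrangement

section DotProduct

variable {ι : Type*} [Fintype ι]

theorem dotProduct_self_nonneg (a : ι → ℝ) : 0 ≤ a ⬝ᵥ a :=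
  Fintype.sum_nonneg fun i => mul_self_nonneg (a i)

theorem continuous_dotProduct_left (a : ι → ℝ) : Continuous fun x : ι → ℝ => a ⬝ᵥ x := by
  fun_prop

theorem convex_setOf_dotProduct_le (a : ι → ℝ) (c : ℝ) : Convex ℝ {x : ι → ℝ | a ⬝ᵥ x ≤ c} :=
  convex_halfSpace_le ⟨dotProduct_add a, fun t x => dotProduct_smul t a x⟩ c

theorem closure_interior_setOf_dotProduct_le {a : ι → ℝ} (ha : a ≠ 0) (c : ℝ) :
    closure (interior {x : ι → ℝ | a ⬝ᵥ x ≤ c}) = {x | a ⬝ᵥ x ≤ c} := by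
  have haa : a ⬝ᵥ a ≠ 0 := dotProduct_self_eq_zero.not.2 ha
  rw [(convex_setOf_dotProduct_le a c).closure_interior_eq_closure_of_nonempty_interior,
    (isClosed_le (continuous_dotProduct_left a) continuous_const).closure_eq]
  refine ⟨((c - 1) / (a ⬝ᵥ a)) • a, interior_maximal (fun x (hx : a ⬝ᵥ x < c) => hx.le)
    (isOpen_lt (continuous_dotProduct_left a) continuous_const) (?_ : _ < c)⟩
  simp [dotProduct_smul, div_mul_cancel₀ _ haa]

noncomputable def dotProductSubConst (a : ι → ℝ) (c : ℝ) : (ι → ℝ) →ᴬ[ℝ] ℝ :=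
  (LinearMap.toContinuousLinearMap (dotProductBilin ℝ ℝ a)).toContinuousAffineMap -
    ContinuousAffineMap.const ℝ _ c

@[simp] theorem dotProductSubConst_apply (a : ι → ℝ) (c : ℝ) (x : ι → ℝ) :
    dotProductSubConst a c x = a ⬝ᵥ x - c := by
  simp [dotProductSubConst]

theorem dotProductSubConst_contLinear_ne_zero {a : ι → ℝ} (ha : a ≠ 0) (c : ℝ) :
    (dotProductSubConst a c).contLinear ≠ 0 := by
  refine DFunLike.ne_iff.2 ⟨a, ?_⟩
  simpa [dotProductSubConst] using dotProduct_self_eq_zero.not.2 ha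

end DotProduct

theorem isPolygon_setOf_dotProduct_le {a : Fin 2 → ℝ} (ha : a ≠ 0) (c : ℝ) :
    IsPolygon {x | a ⬝ᵥ x ≤ c} :=
  .halfplane a c ha

theorem IsPolygon.closure_interior_eq {r : Set (Fin 2 → ℝ)} (hr : IsPolygon r) :
    closure (interior r) = r := by
  induction hr with
  | halfplane a c ha => exact closure_interior_setOf_dotProduct_le ha c
  | sup X Y _ _ hX hY =>
    refine subset_antisymm ?_ (union_subset ?_ ?_)
    · exact ((hX ▸ isClosed_closure).union (hY ▸ isClosed_closure)).closure_interior_subset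
    · exact hX.ge.trans (closure_mono (interior_mono subset_union_left))
    · exact hY.ge.trans (closure_mono (interior_mono subset_union_right))
  | inf X Y _ _ _ _ => exact closure_interior_idem
  | compl X _ hX =>
    refine subset_antisymm isClosed_closure.closure_interior_subset (closure_mono ?_)
    exact (hX ▸ isClosed_closure : IsClosed X).isOpen_compl.subset_interior_closure

theorem IsPolygon.isClosed {r : Set (Fin 2 → ℝ)} (hr : IsPolygon r) : IsClosed r :=
  hr.closure_interior_eq ▸ isClosed_closure

theorem IsPolygon.exists_isCellwiseConstant {r : Set (Fin 2 → ℝ)} (hr : IsPolygon r) :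
    ∃ F : Finset ((Fin 2 → ℝ) →ᴬ[ℝ] ℝ), (∀ f ∈ F, f.contLinear ≠ 0) ∧
      IsCellwiseConstant F r := by
  classical
  induction hr with
  | halfplane a c ha =>
    refine ⟨{dotProductSubConst a c}, by simpa using dotProductSubConst_contLinear_ne_zero ha c, ?_⟩
    simpa [dotProduct, sub_nonpos] using
      isCellwiseConstant_setOf_le_zero (Finset.mem_singleton_self (dotProductSubConst a c))
  | sup X Y _ _ hX hY =>
    obtain ⟨F, hF, hXF⟩ := hX
    obtain ⟨G, hG, hYG⟩ := hY
    refine ⟨F ∪ G, fun f hf => (Finset.mem_union.1 hf).elim (hF f) (hG f), ?_⟩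
    exact (hXF.mono Finset.subset_union_left).union (hYG.mono Finset.subset_union_right)
  | inf X Y _ _ hX hY =>
    obtain ⟨F, hF, hXF⟩ := hX
    obtain ⟨G, hG, hYG⟩ := hY
    refine ⟨F ∪ G, fun f hf => (Finset.mem_union.1 hf).elim (hF f) (hG f), ?_⟩
    exact ((hXF.mono Finset.subset_union_left).inter
      (hYG.mono Finset.subset_union_right)).interior.closure
  | compl X _ hX =>
    obtain ⟨F, hF, hXF⟩ := hX
    exact ⟨F, hF, hXF.compl.closure⟩

theorem IsPolygon.exists_cells_dense_in_compl {r : Set (Fin 2 → ℝ)} (hr : IsPolygon r) :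
    ∃ 𝒟 : Set (Set (Fin 2 → ℝ)), 𝒟.Finite ∧ (∀ D ∈ 𝒟, IsOpen D ∧ Convex ℝ D ∧ D.Nonempty) ∧
      ⋃₀ 𝒟 ⊆ rᶜ ∧ rᶜ ⊆ closure (⋃₀ 𝒟) :=
  let ⟨_, hF, h⟩ := hr.exists_isCellwiseConstant
  h.exists_cells_dense_in_compl hF hr.isClosed

theorem isPolygon_empty : IsPolygon ∅ := by
  have hH := isPolygon_setOf_dotProduct_le (one_ne_zero : (1 : Fin 2 → ℝ) ≠ 0) 0
  convert hH.inf _ _ (hH.compl _) using 1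
  rw [closure_compl, interior_inter, interior_compl, ← sdiff_eq, sdiff_eq_empty.2 subset_closure,
    closure_empty]

theorem IsPolygon.biUnion {ι : Type*} {s : Set ι} (hs : s.Finite) {r : ι → Set (Fin 2 → ℝ)}
    (hr : ∀ i ∈ s, IsPolygon (r i)) : IsPolygon (⋃ i ∈ s, r i) := by
  induction s, hs using Set.Finite.induction_on with
  | empty => simpa using isPolygon_empty
  | insert _ _ ih =>
    rw [biUnion_insert]
    exact .sup _ _ (hr _ (mem_insert _ _)) (ih fun i hi => hr i (mem_insert_of_mem _ hi))

theorem IsPolygon.inter_of_convex {X Y : Set (Fin 2 → ℝ)} (hX : IsPolygon X) (hY : IsPolygon Y)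
    (hc : Convex ℝ (X ∩ Y)) (hi : (interior (X ∩ Y)).Nonempty) : IsPolygon (X ∩ Y) := by
  have := hX.inf _ _ hY
  rwa [hc.closure_interior_eq_closure_of_nonempty_interior hi,
    (hX.isClosed.inter hY.isClosed).closure_eq] at this

section Spider

def rot (v : Fin 2 → ℝ) : Fin 2 → ℝ := ![-v 1, v 0]

theorem rot_dotProduct_self (v : Fin 2 → ℝ) : rot v ⬝ᵥ v = 0 := by
  simp [rot, dotProduct, Fin.sum_univ_two]; ring

theorem rot_ne_zero {v : Fin 2 → ℝ} (hv : v ≠ 0) : rot v ≠ 0 := by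
  contrapose! hv
  have h0 := congr_fun hv 0
  have h1 := congr_fun hv 1
  simp [rot] at h0 h1
  ext i; fin_cases i <;> simp [h0, h1]

theorem dotProduct_self_smul_eq_add_rot (v x : Fin 2 → ℝ) :
    (v ⬝ᵥ v) • x = (v ⬝ᵥ x) • v + (rot v ⬝ᵥ x) • rot v := by
  ext i; fin_cases i <;> simp [rot, dotProduct, Fin.sum_univ_two] <;> ring

/-- A closed rectangle containing the segment from `0` to `p` in its interior; it shrinks to that
segment as `ε → 0`. -/
def stick (p : Fin 2 → ℝ) (ε : ℝ) : Set (Fin 2 → ℝ) :=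
  {x | rot p ⬝ᵥ x ≤ ε} ∩ {x | -rot p ⬝ᵥ x ≤ ε} ∩ {x | -p ⬝ᵥ x ≤ ε} ∩
    {x | p ⬝ᵥ x ≤ p ⬝ᵥ p + ε}

variable {p : Fin 2 → ℝ} {ε : ℝ}

theorem convex_stick (p : Fin 2 → ℝ) (ε : ℝ) : Convex ℝ (stick p ε) :=
  (((convex_setOf_dotProduct_le _ _).inter (convex_setOf_dotProduct_le _ _)).inter
    (convex_setOf_dotProduct_le _ _)).inter (convex_setOf_dotProduct_le _ _)

theorem mem_interior_stick {x : Fin 2 → ℝ} (h₁ : |rot p ⬝ᵥ x| < ε) (h₂ : -ε < p ⬝ᵥ x)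
    (h₃ : p ⬝ᵥ x < p ⬝ᵥ p + ε) : x ∈ interior (stick p ε) := by
  have hnhds : ∀ a c, a ⬝ᵥ x < c → {y | a ⬝ᵥ y ≤ c} ∈ 𝓝 x := fun a c h =>
    mem_of_superset ((isOpen_lt (continuous_dotProduct_left a) continuous_const).mem_nhds h)
      fun y (hy : a ⬝ᵥ y < c) => hy.le
  rw [abs_lt] at h₁
  rw [mem_interior_iff_mem_nhds]
  refine inter_mem (inter_mem (inter_mem (hnhds _ _ h₁.2) (hnhds _ _ ?_)) (hnhds _ _ ?_))
    (hnhds _ _ h₃) <;> rw [neg_dotProduct] <;> linarith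

theorem zero_mem_interior_stick (p : Fin 2 → ℝ) (hε : 0 < ε) : 0 ∈ interior (stick p ε) :=
  mem_interior_stick (by simpa using hε) (by simpa using hε)
    (by simpa using add_pos_of_nonneg_of_pos (dotProduct_self_nonneg p) hε)

theorem self_mem_interior_stick (p : Fin 2 → ℝ) (hε : 0 < ε) : p ∈ interior (stick p ε) :=
  mem_interior_stick (by rwa [rot_dotProduct_self, abs_zero])
    (by linarith [dotProduct_self_nonneg p]) (by linarith)

theorem notMem_stick {q : Fin 2 → ℝ} (h : ε < |rot p ⬝ᵥ q|) : q ∉ stick p ε := by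
  rintro ⟨⟨⟨h₁, h₂⟩, -⟩, -⟩
  rw [mem_ofPred_eq, neg_dotProduct] at h₂
  exact h.not_ge (abs_le.2 ⟨by linarith, h₁⟩)

theorem isBounded_stick (hp : p ≠ 0) (ε : ℝ) : IsBounded (stick p ε) := by
  have hpp : p ⬝ᵥ p ≠ 0 := dotProduct_self_eq_zero.not.2 hp
  have hbox : IsCompact (Icc (-ε) (p ⬝ᵥ p + ε) ×ˢ Icc (-ε) ε) := isCompact_Icc.prod isCompact_Icc
  refine (hbox.image (f := fun st : ℝ × ℝ => (p ⬝ᵥ p)⁻¹ • (st.1 • p + st.2 • rot p))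
    (by fun_prop)).isBounded.subset ?_
  rintro x ⟨⟨⟨h₁, h₂⟩, h₃⟩, h₄⟩
  simp only [mem_ofPred_eq, neg_dotProduct] at h₁ h₂ h₃ h₄
  refine ⟨(p ⬝ᵥ x, rot p ⬝ᵥ x), ⟨⟨by linarith, h₄⟩, ⟨by linarith, h₁⟩⟩, ?_⟩
  simp only [← dotProduct_self_smul_eq_add_rot, smul_smul, inv_mul_cancel₀ hpp, one_smul]

theorem isPolygon_stick (hp : p ≠ 0) (hε : 0 < ε) : IsPolygon (stick p ε) := by
  have h0 := zero_mem_interior_stick p hε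
  have hr := rot_ne_zero hp
  refine .inter_of_convex (.inter_of_convex (.inter_of_convex
    (isPolygon_setOf_dotProduct_le hr _) (isPolygon_setOf_dotProduct_le (neg_ne_zero.2 hr) _)
      ((convex_setOf_dotProduct_le _ _).inter (convex_setOf_dotProduct_le _ _))
      ⟨0, interior_mono (inter_subset_left.trans inter_subset_left) h0⟩)
    (isPolygon_setOf_dotProduct_le (neg_ne_zero.2 hp) _)
      (((convex_setOf_dotProduct_le _ _).inter (convex_setOf_dotProduct_le _ _)).inter
        (convex_setOf_dotProduct_le _ _))
      ⟨0, interior_mono inter_subset_left h0⟩)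
    (isPolygon_setOf_dotProduct_le hp _) (convex_stick p ε) ⟨0, h0⟩

def spider (P : Set (Fin 2 → ℝ)) (ε : ℝ) : Set (Fin 2 → ℝ) := ⋃ p ∈ P, stick p ε

variable {P : Set (Fin 2 → ℝ)}

theorem subset_interior_spider (hε : 0 < ε) : P ⊆ interior (spider P ε) :=
  fun p hp => interior_mono (subset_biUnion_of_mem (u := fun p => stick p ε) hp)
    (self_mem_interior_stick p hε)

theorem notMem_spider {q : Fin 2 → ℝ} (h : ∀ p ∈ P, ε < |rot p ⬝ᵥ q|) : q ∉ spider P ε := by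
  simp only [spider, mem_iUnion₂, not_exists]
  exact fun p hp => notMem_stick (h p hp)

theorem isPolygon_spider (hP : P.Finite) (hP0 : 0 ∉ P) (hε : 0 < ε) : IsPolygon (spider P ε) :=
  .biUnion hP fun _ hp => isPolygon_stick (ne_of_mem_of_not_mem hp hP0) hε

theorem isConnected_interior_spider (hP : P.Nonempty) (hP0 : 0 ∉ P) (hε : 0 < ε) :
    IsConnected (interior (spider P ε)) := by
  have hT : IsConnected (⋃ p ∈ P, interior (stick p ε)) := by
    obtain ⟨p, hp⟩ := hP
    refine ⟨⟨0, mem_biUnion hp (zero_mem_interior_stick p hε)⟩, ?_⟩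
    rw [← sUnion_image]
    exact isPreconnected_sUnion 0 _ (by rintro _ ⟨p, -, rfl⟩; exact zero_mem_interior_stick p hε)
      (by rintro _ ⟨p, -, rfl⟩; exact (convex_stick p ε).interior.isPreconnected)
  refine hT.subset_closure (iUnion₂_subset fun p hp =>
    interior_mono (subset_biUnion_of_mem (u := fun p => stick p ε) hp))
    (interior_subset.trans (iUnion₂_subset fun p hp => ?_))
  rw [← (isPolygon_stick (ne_of_mem_of_not_mem hp hP0) hε).closure_interior_eq]
  exact closure_mono (subset_biUnion_of_mem (u := fun p => interior (stick p ε)) hp)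

theorem isConnected_compl_spider (hP : P.Finite) (hP0 : 0 ∉ P) (hε : 0 < ε) :
    IsConnected (spider P ε)ᶜ :=
  StarConvex.isConnected_compl (by simp)
    (starConvex_iUnion₂ fun p _ => (convex_stick p ε).starConvex
      (interior_subset (zero_mem_interior_stick p hε)))
    ((isBounded_biUnion hP).2 fun p hp => isBounded_stick (ne_of_mem_of_not_mem hp hP0) ε)

end Spider

theorem exists_isPolygon_meets_interior_and_compl {𝒟 : Set (Set (Fin 2 → ℝ))} (h𝒟 : 𝒟.Finite)
    (hD : ∀ D ∈ 𝒟, IsOpen D ∧ D.Nonempty) :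
    ∃ K, IsPolygon K ∧ IsConnected (interior K) ∧ IsConnected Kᶜ ∧
      ∀ D ∈ 𝒟, (D ∩ interior K).Nonempty ∧ (D ∩ Kᶜ).Nonempty := by
  have hp : ∀ D ∈ 𝒟, ∃ p ∈ D, p ≠ 0 := fun D hD' =>
    (dense_compl_singleton 0).inter_open_nonempty D (hD D hD').1 (hD D hD').2 |>.imp
      fun _ h => ⟨h.1, h.2⟩
  choose! p hpD hp0 using hp
  -- the extra point `1` keeps `interior K` nonempty when `𝒟` is empty
  set P := insert 1 (p '' 𝒟)
  have hPfin : P.Finite := (h𝒟.image p).insert 1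
  have hP0 : 0 ∉ P := by
    rintro (h | ⟨D, hD', h⟩)
    exacts [one_ne_zero h.symm, hp0 D hD' h]
  have hq : ∀ D ∈ 𝒟, ∃ q ∈ D, ∀ p' ∈ P, rot p' ⬝ᵥ q ≠ 0 := fun D hD' => by
    have hdense := dense_setOf_forall_ne_zero hPfin
      (f := fun p' => dotProductSubConst (rot p') 0)
      fun p' hp' =>
        dotProductSubConst_contLinear_ne_zero (rot_ne_zero (ne_of_mem_of_not_mem hp' hP0)) 0
    obtain ⟨q, hqD, hq⟩ := hdense.inter_open_nonempty D (hD D hD').1 (hD D hD').2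
    exact ⟨q, hqD, by simpa using hq⟩
  choose! q hqD hq0 using hq
  have hsmall : ∀ᶠ ε in 𝓝[>] (0 : ℝ), ∀ D ∈ 𝒟, ∀ p' ∈ P, ε < |rot p' ⬝ᵥ q D| :=
    (eventually_all_finite h𝒟).2 fun D hD' => (eventually_all_finite hPfin).2 fun p' hp' =>
      nhdsWithin_le_nhds (eventually_lt_nhds (abs_pos.2 (hq0 D hD' p' hp')))
  obtain ⟨ε, hε, hεpos⟩ := (hsmall.and self_mem_nhdsWithin).exists
  refine ⟨spider P ε, isPolygon_spider hPfin hP0 hεpos,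
    isConnected_interior_spider (insert_nonempty _ _) hP0 hεpos,
    isConnected_compl_spider hPfin hP0 hεpos, fun D hD' => ⟨⟨p D, hpD D hD', ?_⟩,
      ⟨q D, hqD D hD', notMem_spider (hε D hD')⟩⟩⟩
  exact subset_interior_spider hεpos (mem_insert_of_mem _ (mem_image_of_mem p hD'))

theorem IsPolygon.exists_eq_union_of_isConnected {r K : Set (Fin 2 → ℝ)} (hr : IsPolygon r)
    (hK : IsPolygon K) (h₁ : IsConnected (rᶜ ∪ Kᶜ)) (h₂ : IsConnected (rᶜ ∪ interior K)) :
    ∃ r₁ r₂ : Set (Fin 2 → ℝ), IsPolygon r₁ ∧ IsPolygon r₂ ∧ r = r₁ ∪ r₂ ∧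
      IsConnected r₁ᶜ ∧ IsConnected r₂ᶜ := by
  refine ⟨_, _, hr.inf _ _ hK, hr.inf _ _ (hK.compl _),
    (closure_interior_inter_union_closure_interior_inter_closure_compl hr.closure_interior_eq
      hK.closure_interior_eq).symm, h₁.compl_closure_interior_inter hr.isClosed hK.isClosed, ?_⟩
  rw [← compl_compl (interior K), ← closure_compl] at h₂
  exact h₂.compl_closure_interior_inter hr.isClosed isClosed_closure

/-- Every regular closed polygon in `ℝ²` is the union of two regular closed polygons,
each with connected complement. -/
theorem polygon_eq_union_of_two_with_connected_complement
    (r : Set (Fin 2 → ℝ)) (hr : IsPolygon r) :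
    ∃ r₁ r₂ : Set (Fin 2 → ℝ),
      IsPolygon r₁ ∧ IsPolygon r₂ ∧ r = r₁ ∪ r₂ ∧
      IsConnected r₁ᶜ ∧ IsConnected r₂ᶜ := by
  obtain ⟨𝒟, h𝒟, hD, hsub, hdense⟩ := hr.exists_cells_dense_in_compl
  obtain ⟨K, hK, hintK, hKc, hmeet⟩ :=
    exists_isPolygon_meets_interior_and_compl h𝒟 fun D hD' => ⟨(hD D hD').1, (hD D hD').2.2⟩
  refine hr.exists_eq_union_of_isConnected hK ?_ ?_
  · exact hKc.union_of_subset_closure_sUnion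
      (fun D hD' => ⟨(hD D hD').2.1.isPreconnected, (hmeet D hD').2⟩) hsub hdense
  · exact hintK.union_of_subset_closure_sUnion
      (fun D hD' => ⟨(hD D hD').2.1.isPreconnected, (hmeet D hD').1⟩) hsub hdense
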